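/- (Necessity form of Theorem 3, combined with Proposition 2.) For every optimal solution (ℓ*, d*) of problem (P1.1) there exist real numbers ω_1 ≤ ω_2 ≤ … ≤ ω_N such that for every i ∈ {1,…,N}: ℓ*_i = τ·√(η h'_i · max(ω_i, 0)/(3 ζ C³)) and d*_i = τ B · log₂( max( ω_i · B η h'_i g_i/(σ² ln 2), 1 ) ), and such that for every i ∈ {1,…,N−1} with ω_i < ω_{i+1} the task-causality constraint at slot i is tight: Σ_{j=1}^i (ℓ*_j + d*_j) = Σ_{j=1}^i A_j. -/

import Mathlib

open Finset

/-- Local-computing energy: `E_loc(x) = ζ C³ x³ / τ²`. -/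
noncomputable def Eloc (ζ C τ x : ℝ) : ℝ := ζ * C ^ 3 * x ^ 3 / τ ^ 2

/-- Offloading energy at a slot with channel gain `g`: `E_off(x) = (τσ²/g)(2^{x/(τB)} − 1)`. -/
noncomputable def Eoff (τ σ2 g B x : ℝ) : ℝ := τ * σ2 / g * ((2 : ℝ) ^ (x / (τ * B)) - 1)

/-- Feasibility for problem (P1.1): nonnegativity, task causality, task completion. -/
def FeasP11 (N : ℕ) (A ℓ d : ℕ → ℝ) : Prop :=
  (∀ i ∈ Finset.Icc 1 N, 0 ≤ ℓ i ∧ 0 ≤ d i) ∧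
  (∀ i ∈ Finset.Icc 1 (N - 1),
    ∑ j ∈ Finset.Icc 1 i, (ℓ j + d j) ≤ ∑ j ∈ Finset.Icc 1 i, A j) ∧
  ∑ j ∈ Finset.Icc 1 N, (ℓ j + d j) = ∑ j ∈ Finset.Icc 1 N, A j

/-!
At an optimum no feasible first-order move of work can lower the cost. Let `ω i` be the weighted
marginal cost of local computing in slot `i`. Moving work from local computing to offloading within
a slot shows `ω i` is at most the offloading marginal, with equality when `d i > 0`; solving these
equalities gives the closed forms. Postponing local work from slot `k` to slot `k + 1` keeps every
prefix constraint, so `ω` is nondecreasing. Advancing work from `k + 1` to `k` is feasible when the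
causality constraint at `k` is slack, so a strict increase `ω k < ω (k + 1)` forces it to be tight.
-/

theorem HasDerivAt.nonneg_of_isMinOn_Icc {φ : ℝ → ℝ} {φ' a b : ℝ} (hφ : HasDerivAt φ φ' a)
    (hab : a < b) (hmin : IsMinOn φ (Set.Icc a b) a) : 0 ≤ φ' := by
  have hcone : b - a ∈ posTangentConeAt (Set.Icc a b) a :=
    sub_mem_posTangentConeAt_of_segment_subset (segment_eq_Icc hab.le).subset
  have := hmin.localize.hasFDerivWithinAt_nonneg hφ.hasDerivWithinAt.hasFDerivWithinAt hcone
  simp only [ContinuousLinearMap.toSpanSingleton_apply, smul_eq_mul] at this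
  exact nonneg_of_mul_nonneg_right this (sub_pos.2 hab)

theorem sum_separable_directional_nonneg {ι : Type*} {s : Finset ι} {G H : ι → ℝ → ℝ}
    {x y u v G' H' : ι → ℝ} {δ : ℝ}
    (hG : ∀ i ∈ s, HasDerivAt (G i) (G' i) (x i)) (hH : ∀ i ∈ s, HasDerivAt (H i) (H' i) (y i))
    (hδ : 0 < δ)
    (hmin : ∀ t ∈ Set.Icc 0 δ, ∑ i ∈ s, (G i (x i) + H i (y i))
      ≤ ∑ i ∈ s, (G i (x i + t * u i) + H i (y i + t * v i))) :
    0 ≤ ∑ i ∈ s, (G' i * u i + H' i * v i) := by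
  have hline (a w : ℝ) : HasDerivAt (fun t : ℝ => a + t * w) w 0 := by
    simpa using ((hasDerivAt_id (0 : ℝ)).mul_const w).const_add a
  have hφ : HasDerivAt (fun t => ∑ i ∈ s, (G i (x i + t * u i) + H i (y i + t * v i)))
      (∑ i ∈ s, (G' i * u i + H' i * v i)) 0 :=
    HasDerivAt.fun_sum fun i hi =>
      ((hG i hi).comp_of_eq 0 (hline _ _) (by simp)).add
        ((hH i hi).comp_of_eq 0 (hline _ _) (by simp))
  exact hφ.nonneg_of_isMinOn_Icc hδ (isMinOn_iff.2 fun t ht => by simpa using hmin t ht)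

theorem sum_mul_pi_single_one {ι R : Type*} [DecidableEq ι] [NonAssocSemiring R] {s : Finset ι}
    {i : ι} (hi : i ∈ s) (f : ι → R) : ∑ j ∈ s, f j * (Pi.single i 1 : ι → R) j = f i := by
  simp [Pi.single_apply, hi]

theorem sum_Icc_pi_single {M : Type*} [AddCommMonoid M] {i m : ℕ} (hi : 1 ≤ i) (a : M) :
    ∑ j ∈ Icc 1 m, (Pi.single i a : ℕ → M) j = if i ≤ m then a else 0 := by
  simp [Finset.sum_pi_single', hi]

namespace FeasP11

variable {N : ℕ} {A ℓ d : ℕ → ℝ}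

theorem swap (hf : FeasP11 N A ℓ d) : FeasP11 N A d ℓ := by
  obtain ⟨hnn, hcaus, hcomp⟩ := hf
  refine ⟨fun i hi => (hnn i hi).symm, ?_, ?_⟩ <;> simp only [add_comm (d _)]
  exacts [hcaus, hcomp]

theorem perturb {u v : ℕ → ℝ} {t : ℝ} (hf : FeasP11 N A ℓ d)
    (hnn : ∀ i ∈ Icc 1 N, 0 ≤ ℓ i + t * u i ∧ 0 ≤ d i + t * v i)
    (hcaus : ∀ m ∈ Icc 1 (N - 1), t * ∑ j ∈ Icc 1 m, (u j + v j)
      ≤ ∑ j ∈ Icc 1 m, A j - ∑ j ∈ Icc 1 m, (ℓ j + d j))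
    (hbal : ∑ j ∈ Icc 1 N, (u j + v j) = 0) :
    FeasP11 N A (fun i => ℓ i + t * u i) (fun i => d i + t * v i) := by
  have hsum (m : ℕ) : ∑ j ∈ Icc 1 m, (ℓ j + t * u j + (d j + t * v j))
      = ∑ j ∈ Icc 1 m, (ℓ j + d j) + t * ∑ j ∈ Icc 1 m, (u j + v j) := by
    rw [mul_sum, ← sum_add_distrib]
    exact sum_congr rfl fun j _ => by ring
  refine ⟨hnn, fun m hm => ?_, ?_⟩
  · rw [hsum]; linarith [hcaus m hm]
  · rw [hsum, hbal, mul_zero, add_zero, hf.2.2]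

theorem exchange {i : ℕ} {t : ℝ} (hf : FeasP11 N A ℓ d) (ht : 0 ≤ t) (htℓ : t ≤ ℓ i) :
    FeasP11 N A (fun j => ℓ j + t * (-Pi.single i 1 : ℕ → ℝ) j)
      (fun j => d j + t * (Pi.single i 1 : ℕ → ℝ) j) := by
  refine hf.perturb (fun j hj => ?_) (fun m hm => ?_) (by simp)
  · rcases eq_or_ne j i with rfl | hji
    · simp only [Pi.neg_apply, Pi.single_eq_same]
      constructor <;> linarith [(hf.1 j hj).2]
    · simpa [hji] using hf.1 j hj
  · simpa using hf.2.1 m hm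

theorem transfer {p q : ℕ} {t : ℝ} (hf : FeasP11 N A ℓ d) (hp : p ∈ Icc 1 N) (hq : q ∈ Icc 1 N)
    (ht : 0 ≤ t) (htℓ : t ≤ ℓ p)
    (hslack : ∀ m ∈ Icc 1 (N - 1), q ≤ m → m < p →
      t ≤ ∑ j ∈ Icc 1 m, A j - ∑ j ∈ Icc 1 m, (ℓ j + d j)) :
    FeasP11 N A (fun j => ℓ j + t * (Pi.single q 1 - Pi.single p 1 : ℕ → ℝ) j)
      (fun j => d j + t * (0 : ℕ → ℝ) j) := by
  rw [mem_Icc] at hp hq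
  refine hf.perturb (fun j hj => ?_) (fun m hm => ?_) ?_
  · have hq1 : 0 ≤ t * (Pi.single q 1 : ℕ → ℝ) j :=
      mul_nonneg ht ((Pi.single_nonneg.2 zero_le_one : (0 : ℕ → ℝ) ≤ Pi.single q 1) j)
    rcases eq_or_ne j p with rfl | hjp
    · simp only [Pi.sub_apply, Pi.single_eq_same, Pi.zero_apply, mul_zero, add_zero]
      exact ⟨by linarith, (hf.1 j hj).2⟩
    · simp only [Pi.sub_apply, Pi.single_eq_of_ne hjp, Pi.zero_apply, mul_zero, add_zero,
        sub_zero]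
      exact ⟨by linarith [(hf.1 j hj).1], (hf.1 j hj).2⟩
  · have hslack0 := sub_nonneg.2 (hf.2.1 m hm)
    simp only [Pi.sub_apply, Pi.zero_apply, add_zero, sum_sub_distrib,
      sum_Icc_pi_single hq.1, sum_Icc_pi_single hp.1]
    by_cases hqm : q ≤ m <;> by_cases hpm : p ≤ m <;> simp only [hqm, hpm, if_true, if_false]
    · simpa using hslack0
    · simpa using hslack m hm hqm (by omega)
    · nlinarith
    · simpa using hslack0
  · simp [sum_sub_distrib, sum_Icc_pi_single hq.1, sum_Icc_pi_single hp.1, hq.2, hp.2]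

end FeasP11

def IsOptimalP11 (N : ℕ) (A : ℕ → ℝ) (G H : ℕ → ℝ → ℝ) (ℓ d : ℕ → ℝ) : Prop :=
  FeasP11 N A ℓ d ∧ ∀ ℓ' d' : ℕ → ℝ, FeasP11 N A ℓ' d' →
    ∑ i ∈ Icc 1 N, (G i (ℓ i) + H i (d i)) ≤ ∑ i ∈ Icc 1 N, (G i (ℓ' i) + H i (d' i))

namespace IsOptimalP11

variable {N : ℕ} {A ℓ d G' H' : ℕ → ℝ} {G H : ℕ → ℝ → ℝ}

theorem swap (hopt : IsOptimalP11 N A G H ℓ d) : IsOptimalP11 N A H G d ℓ := by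
  refine ⟨hopt.1.swap, fun ℓ' d' hf => ?_⟩
  simpa only [add_comm (G _ _)] using hopt.2 d' ℓ' hf.swap

theorem directional_nonneg (hopt : IsOptimalP11 N A G H ℓ d)
    (hG : ∀ i ∈ Icc 1 N, HasDerivAt (G i) (G' i) (ℓ i))
    (hH : ∀ i ∈ Icc 1 N, HasDerivAt (H i) (H' i) (d i)) {u v : ℕ → ℝ} {δ : ℝ} (hδ : 0 < δ)
    (hdir : ∀ t ∈ Set.Icc 0 δ, FeasP11 N A (fun i => ℓ i + t * u i) (fun i => d i + t * v i)) :
    0 ≤ ∑ i ∈ Icc 1 N, (G' i * u i + H' i * v i) :=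
  sum_separable_directional_nonneg hG hH hδ fun t ht => hopt.2 _ _ (hdir t ht)

theorem marginal_le_of_pos (hopt : IsOptimalP11 N A G H ℓ d)
    (hG : ∀ i ∈ Icc 1 N, HasDerivAt (G i) (G' i) (ℓ i))
    (hH : ∀ i ∈ Icc 1 N, HasDerivAt (H i) (H' i) (d i)) {i : ℕ} (hi : i ∈ Icc 1 N)
    (hℓ : 0 < ℓ i) : G' i ≤ H' i := by
  have := hopt.directional_nonneg hG hH hℓ fun t ht => hopt.1.exchange ht.1 ht.2
  simp only [Pi.neg_apply, mul_neg, sum_add_distrib, sum_neg_distrib,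
    sum_mul_pi_single_one hi] at this
  linarith

theorem marginal_le_marginal_succ (hopt : IsOptimalP11 N A G H ℓ d)
    (hG : ∀ i ∈ Icc 1 N, HasDerivAt (G i) (G' i) (ℓ i))
    (hH : ∀ i ∈ Icc 1 N, HasDerivAt (H i) (H' i) (d i)) {k : ℕ} (hk : k ∈ Icc 1 (N - 1))
    (hℓ : 0 < ℓ k) : G' k ≤ G' (k + 1) := by
  have hk' : k ∈ Icc 1 N := by simp only [mem_Icc] at hk ⊢; omega
  have hk1 : k + 1 ∈ Icc 1 N := by simp only [mem_Icc] at hk ⊢; omega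
  have := hopt.directional_nonneg hG hH hℓ fun t ht =>
    hopt.1.transfer hk' hk1 ht.1 ht.2 fun m _ hm hm' => by omega
  simp only [Pi.sub_apply, Pi.zero_apply, mul_sub, mul_zero, add_zero, sum_sub_distrib,
    sum_mul_pi_single_one hk', sum_mul_pi_single_one hk1] at this
  linarith

theorem marginal_succ_le_marginal (hopt : IsOptimalP11 N A G H ℓ d)
    (hG : ∀ i ∈ Icc 1 N, HasDerivAt (G i) (G' i) (ℓ i))
    (hH : ∀ i ∈ Icc 1 N, HasDerivAt (H i) (H' i) (d i)) {k : ℕ} (hk : k ∈ Icc 1 (N - 1))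
    (hℓ : 0 < ℓ (k + 1))
    (hslack : ∑ j ∈ Icc 1 k, (ℓ j + d j) < ∑ j ∈ Icc 1 k, A j) : G' (k + 1) ≤ G' k := by
  have hk' : k ∈ Icc 1 N := by simp only [mem_Icc] at hk ⊢; omega
  have hk1 : k + 1 ∈ Icc 1 N := by simp only [mem_Icc] at hk ⊢; omega
  have hδ : 0 < min (ℓ (k + 1)) (∑ j ∈ Icc 1 k, A j - ∑ j ∈ Icc 1 k, (ℓ j + d j)) :=
    lt_min hℓ (sub_pos.2 hslack)
  have := hopt.directional_nonneg hG hH hδ fun t ht =>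
    hopt.1.transfer hk1 hk' ht.1 (ht.2.trans (min_le_left _ _)) fun m _ hm hm' => by
      obtain rfl : m = k := by omega
      exact ht.2.trans (min_le_right _ _)
  simp only [Pi.sub_apply, Pi.zero_apply, mul_sub, mul_zero, add_zero, sum_sub_distrib,
    sum_mul_pi_single_one hk', sum_mul_pi_single_one hk1] at this
  linarith

theorem kkt (hopt : IsOptimalP11 N A G H ℓ d)
    (hG : ∀ i ∈ Icc 1 N, HasDerivAt (G i) (G' i) (ℓ i))
    (hH : ∀ i ∈ Icc 1 N, HasDerivAt (H i) (H' i) (d i))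
    (hG'_nonneg : ∀ i ∈ Icc 1 N, 0 ≤ G' i) (hG'_zero : ∀ i ∈ Icc 1 N, ℓ i = 0 → G' i = 0)
    (hH'_nonneg : ∀ i ∈ Icc 1 N, 0 ≤ H' i) :
    (∀ k ∈ Icc 1 (N - 1), G' k ≤ G' (k + 1)) ∧
    (∀ i ∈ Icc 1 N, G' i ≤ H' i ∧ (0 < d i → G' i = H' i)) ∧
    (∀ k ∈ Icc 1 (N - 1), G' k < G' (k + 1) →
      ∑ j ∈ Icc 1 k, (ℓ j + d j) = ∑ j ∈ Icc 1 k, A j) := by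
  have hmem {k : ℕ} (hk : k ∈ Icc 1 (N - 1)) : k ∈ Icc 1 N ∧ k + 1 ∈ Icc 1 N := by
    simp only [mem_Icc] at hk ⊢; omega
  have hle : ∀ i ∈ Icc 1 N, G' i ≤ H' i := fun i hi => by
    rcases (hopt.1.1 i hi).1.eq_or_lt with h0 | hpos
    · rw [hG'_zero i hi h0.symm]; exact hH'_nonneg i hi
    · exact hopt.marginal_le_of_pos hG hH hi hpos
  refine ⟨fun k hk => ?_, fun i hi => ⟨hle i hi, fun hd => ?_⟩, fun k hk hlt => ?_⟩
  · rcases (hopt.1.1 k (hmem hk).1).1.eq_or_lt with h0 | hpos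
    · rw [hG'_zero k (hmem hk).1 h0.symm]; exact hG'_nonneg _ (hmem hk).2
    · exact hopt.marginal_le_marginal_succ hG hH hk hpos
  · exact (hle i hi).antisymm (hopt.swap.marginal_le_of_pos hH hG hi hd)
  · by_contra hne
    have hpos : 0 < ℓ (k + 1) := (hopt.1.1 (k + 1) (hmem hk).2).1.lt_of_ne fun h0 => by
      rw [hG'_zero _ (hmem hk).2 h0.symm] at hlt; linarith [hG'_nonneg k (hmem hk).1]
    linarith [hopt.marginal_succ_le_marginal hG hH hk hpos ((hopt.1.2.1 k hk).lt_of_ne hne)]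

end IsOptimalP11

theorem hasDerivAt_Eloc (ζ C τ x : ℝ) :
    HasDerivAt (Eloc ζ C τ) (3 * ζ * C ^ 3 * x ^ 2 / τ ^ 2) x :=
  (((hasDerivAt_pow 3 x).const_mul (ζ * C ^ 3)).div_const (τ ^ 2)).congr_deriv (by ring)

theorem hasDerivAt_Eoff {τ : ℝ} (σ2 g B x : ℝ) (hτ : τ ≠ 0) :
    HasDerivAt (Eoff τ σ2 g B) (σ2 * Real.log 2 * 2 ^ (x / (τ * B)) / (g * B)) x :=
  (((((hasDerivAt_id x).div_const (τ * B)).const_rpow two_pos).sub_const 1).const_mul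
    (τ * σ2 / g)).congr_deriv (by simp only [id]; field_simp)

theorem eq_mul_sqrt_max_marginal {ℓ τ a K : ℝ} (hℓ : 0 ≤ ℓ) (hτ : 0 < τ) (ha : 0 < a)
    (hK : 0 < K) : ℓ = τ * √(a * max (1 / a * (K * ℓ ^ 2 / τ ^ 2)) 0 / K) := by
  rw [max_eq_left (by positivity),
    show a * (1 / a * (K * ℓ ^ 2 / τ ^ 2)) / K = (ℓ / τ) ^ 2 by field_simp,
    Real.sqrt_sq (by positivity)]
  field_simp

theorem eq_mul_logb_max {d T r : ℝ} (hd : 0 ≤ d) (hT : 0 < T) (hle : r ≤ 2 ^ (d / T))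
    (heq : 0 < d → r = 2 ^ (d / T)) : d = T * Real.logb 2 (max r 1) := by
  rcases hd.eq_or_lt with rfl | hpos
  · rw [max_eq_right (by simpa using hle), Real.logb_one, mul_zero]
  · rw [heq hpos, max_eq_left (Real.one_le_rpow one_le_two (by positivity)),
      Real.logb_rpow two_pos one_lt_two.ne']
    field_simp

theorem eq_mul_logb_max_marginal {τ η σ2 B h g d ω : ℝ} (hτ : 0 < τ) (hη : 0 < η)
    (hσ2 : 0 < σ2) (hB : 0 < B) (hh : 0 < h) (hg : 0 < g) (hd : 0 ≤ d)
    (hle : ω ≤ 1 / (η * h) * (σ2 * Real.log 2 * 2 ^ (d / (τ * B)) / (g * B)))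
    (heq : 0 < d → ω = 1 / (η * h) * (σ2 * Real.log 2 * 2 ^ (d / (τ * B)) / (g * B))) :
    d = τ * B * Real.logb 2 (max (ω * (B * η * h * g) / (σ2 * Real.log 2)) 1) := by
  have hscale : 1 / (η * h) * (σ2 * Real.log 2 * 2 ^ (d / (τ * B)) / (g * B))
      * (B * η * h * g) / (σ2 * Real.log 2) = 2 ^ (d / (τ * B)) := by
    field_simp
  refine eq_mul_logb_max hd (by positivity) ?_ fun hpos => ?_
  · rw [← hscale]; gcongr
  · rw [← hscale, heq hpos]

theorem stmt_15_general
    (N : ℕ)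
    (τ η ζ C σ2 B : ℝ)
    (hτ : 0 < τ) (hη : 0 < η) (hζ : 0 < ζ) (hC : 0 < C) (hσ2 : 0 < σ2) (hB : 0 < B)
    (h g : ℕ → ℝ)
    (hhpos : ∀ i ∈ Finset.Icc 1 N, 0 < h i) (hgpos : ∀ i ∈ Finset.Icc 1 N, 0 < g i)
    (h' : ℕ → ℝ)
    (hh' : ∀ i ∈ Finset.Icc 1 N,
      (∃ j ∈ Finset.Icc 1 i, h' i = h j) ∧ ∀ j ∈ Finset.Icc 1 i, h j ≤ h' i)
    (A : ℕ → ℝ)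
    (ℓ d : ℕ → ℝ)
    (hfeas : FeasP11 N A ℓ d)
    (hopt : ∀ ℓ' d' : ℕ → ℝ, FeasP11 N A ℓ' d' →
      ∑ i ∈ Finset.Icc 1 N, 1 / (η * h' i) * (Eloc ζ C τ (ℓ i) + Eoff τ σ2 (g i) B (d i))
        ≤ ∑ i ∈ Finset.Icc 1 N, 1 / (η * h' i) * (Eloc ζ C τ (ℓ' i) + Eoff τ σ2 (g i) B (d' i))) :
    ∃ ω : ℕ → ℝ,
      (∀ i ∈ Finset.Icc 1 (N - 1), ω i ≤ ω (i + 1)) ∧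
      (∀ i ∈ Finset.Icc 1 N,
        ℓ i = τ * Real.sqrt (η * h' i * max (ω i) 0 / (3 * ζ * C ^ 3)) ∧
        d i = τ * B * Real.logb 2 (max (ω i * (B * η * h' i * g i) / (σ2 * Real.log 2)) 1)) ∧
      (∀ i ∈ Finset.Icc 1 (N - 1), ω i < ω (i + 1) →
        ∑ j ∈ Finset.Icc 1 i, (ℓ j + d j) = ∑ j ∈ Finset.Icc 1 i, A j) := by
  have hh'pos : ∀ i ∈ Icc 1 N, 0 < h' i := fun i hi => by
    obtain ⟨⟨j, hj, hji⟩, -⟩ := hh' i hi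
    exact hji ▸ hhpos j (Icc_subset_Icc_right (mem_Icc.1 hi).2 hj)
  set ω : ℕ → ℝ := fun i => 1 / (η * h' i) * (3 * ζ * C ^ 3 * ℓ i ^ 2 / τ ^ 2)
  set μ : ℕ → ℝ := fun i => 1 / (η * h' i) * (σ2 * Real.log 2 * 2 ^ (d i / (τ * B)) / (g i * B))
  have hopt' : IsOptimalP11 N A (fun i x => 1 / (η * h' i) * Eloc ζ C τ x)
      (fun i y => 1 / (η * h' i) * Eoff τ σ2 (g i) B y) ℓ d :=
    ⟨hfeas, by simpa only [mul_add] using hopt⟩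
  obtain ⟨hmono, hslot, htight⟩ := hopt'.kkt (G' := ω) (H' := μ)
    (fun i _ => (hasDerivAt_Eloc ζ C τ (ℓ i)).const_mul _)
    (fun i _ => (hasDerivAt_Eoff σ2 (g i) B (d i) hτ.ne').const_mul _)
    (fun i hi => by have := hh'pos i hi; positivity) (fun i _ h0 => by simp [ω, h0])
    (fun i hi => by have := hh'pos i hi; have := hgpos i hi; positivity)
  refine ⟨ω, hmono, fun i hi => ⟨?_, ?_⟩, htight⟩
  · exact eq_mul_sqrt_max_marginal (hfeas.1 i hi).1 hτ (by have := hh'pos i hi; positivity)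
      (by positivity)
  · exact eq_mul_logb_max_marginal hτ hη hσ2 hB (hh'pos i hi) (hgpos i hi) (hfeas.1 i hi).2
      (hslot i hi).1 (hslot i hi).2

/-- Necessity form of Theorem 3 (with Proposition 2): every optimal solution of (P1.1)
is of the stated closed form for some nondecreasing computation levels `ω`, and the
task-causality constraint is tight at every slot where `ω` strictly increases. -/
theorem stmt_15
    (N : ℕ) (hN : 0 < N)
    (τ η ζ C σ2 B : ℝ)
    (hτ : 0 < τ) (hη : 0 < η) (hζ : 0 < ζ) (hC : 0 < C) (hσ2 : 0 < σ2) (hB : 0 < B)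
    (h g : ℕ → ℝ)
    (hhpos : ∀ i ∈ Finset.Icc 1 N, 0 < h i) (hgpos : ∀ i ∈ Finset.Icc 1 N, 0 < g i)
    (h' : ℕ → ℝ)
    (hh' : ∀ i ∈ Finset.Icc 1 N,
      (∃ j ∈ Finset.Icc 1 i, h' i = h j) ∧ ∀ j ∈ Finset.Icc 1 i, h j ≤ h' i)
    (A : ℕ → ℝ) (hA : ∀ i ∈ Finset.Icc 1 N, 0 ≤ A i)
    (ℓ d : ℕ → ℝ)
    (hfeas : FeasP11 N A ℓ d)
    (hopt : ∀ ℓ' d' : ℕ → ℝ, FeasP11 N A ℓ' d' →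
      ∑ i ∈ Finset.Icc 1 N, 1 / (η * h' i) * (Eloc ζ C τ (ℓ i) + Eoff τ σ2 (g i) B (d i))
        ≤ ∑ i ∈ Finset.Icc 1 N, 1 / (η * h' i) * (Eloc ζ C τ (ℓ' i) + Eoff τ σ2 (g i) B (d' i))) :
    ∃ ω : ℕ → ℝ,
      (∀ i ∈ Finset.Icc 1 (N - 1), ω i ≤ ω (i + 1)) ∧
      (∀ i ∈ Finset.Icc 1 N,
        ℓ i = τ * Real.sqrt (η * h' i * max (ω i) 0 / (3 * ζ * C ^ 3)) ∧
        d i = τ * B * Real.logb 2 (max (ω i * (B * η * h' i * g i) / (σ2 * Real.log 2)) 1)) ∧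
      (∀ i ∈ Finset.Icc 1 (N - 1), ω i < ω (i + 1) →
        ∑ j ∈ Finset.Icc 1 i, (ℓ j + d j) = ∑ j ∈ Finset.Icc 1 i, A j) :=
  stmt_15_general N τ η ζ C σ2 B hτ hη hζ hC hσ2 hB h g hhpos hgpos h' hh' A ℓ d hfeas hopt
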